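/- Let γ denote the Euler–Mascheroni constant. The series whose terms are 1/( a·b·c·d·(a+c)·(b+d) ), summed over all quadruples (a,b,c,d) of positive integers with b·c − a·d = 1 and c ≤ d, converges and its sum equals 2γ − 1; equivalently, γ = 1/2 + (1/2)·∑ 1/( a·b·c·d·(a+c)·(b+d) ) over this index set. (This is Hata's Farey-fraction series for γ: the index set is exactly the set of pairs of consecutive Farey fractions (a/b, c/d) with 0 ≤ a/b < c/d ≤ 1 and a·d − b·c = −1, excluding the pairs (0/1, 1/n).) -/

import Mathlib

/-!
Hata's argument. Inserting the mediant `(a + c)/(b + d)` into a pair `(a/b, c/d)` of `H` on the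
left or on the right gives two pairs of `H`, and every pair of `H` arises in exactly one way by
iterating this from a root `(1/(n + 2), 1/(n + 1))`; so `H` is a forest of binary trees indexed
by `ℕ × List Bool`.

Put `φ(a, b, c, d) = 1/k + 1/(k + 1) - 2 log ((k + 1)/k)` with `k = a d`. Because `b c = a d + 1`,
the summand at a node is `φ` of the node minus `φ` of its two children, so the sum over the tree
below a node telescopes to its `φ`, the remainder being the sum of `φ` over depth `N`. Since
`0 ≤ φ ≤ 1/(a d · b c) = (c/d - a/b)/(a c)`, `a c ≥ N + 1` at depth `N`, and the Farey
intervals at a fixed depth tile the root's interval, this remainder tends to `0`. Finally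
`∑ₙ φ(root n) = ∑ₙ (1/(n + 1) + 1/(n + 2) - 2 log ((n + 2)/(n + 1))) = 2γ - 1`.
-/

/-- Quadruples `(a,b,c,d)` of positive integers with `b·c − a·d = 1` and `c ≤ d`
(pairs of consecutive Farey fractions `(a/b, c/d)`, excluding the pairs `(0/1, 1/n)`). -/
def H : Set (ℤ × ℤ × ℤ × ℤ) :=
  {p | 0 < p.1 ∧ 0 < p.2.1 ∧ 0 < p.2.2.1 ∧ 0 < p.2.2.2 ∧
    p.2.1 * p.2.2.1 - p.1 * p.2.2.2 = 1 ∧ p.2.2.1 ≤ p.2.2.2}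

open Filter Topology Finset Real

theorem hasSum_of_tendsto_sum_of_monotone {ι : Type*} {f : ι → ℝ} (hf : ∀ i, 0 ≤ f i)
    {s : ℕ → Finset ι} (hs : Monotone s) (hcover : ∀ i, ∃ n, i ∈ s n) {a : ℝ}
    (hlim : Tendsto (fun n => ∑ i ∈ s n, f i) atTop (𝓝 a)) : HasSum f a := by
  have hs' := tendsto_atTop_finset_of_monotone hs hcover
  have hsum_le : ∀ n, ∑ i ∈ s n, f i ≤ a :=
    Monotone.ge_of_tendsto (fun m n hmn => sum_le_sum_of_subset_of_nonneg (hs hmn)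
      fun i _ _ => hf i) hlim
  have hsummable : Summable f := by
    refine summable_of_sum_le (c := a) hf fun u => ?_
    obtain ⟨n, hn⟩ := (hs'.eventually (eventually_ge_atTop u)).exists
    exact (sum_le_sum_of_subset_of_nonneg hn fun i _ _ => hf i).trans (hsum_le n)
  rw [tendsto_nhds_unique hlim (hsummable.hasSum.comp hs')]
  exact hsummable.hasSum

theorem hasSum_prod_of_nonneg {α β : Type*} {f : α × β → ℝ} (hf : 0 ≤ f) {g : α → ℝ}
    (hfiber : ∀ x, HasSum (fun y => f (x, y)) (g x)) {a : ℝ} (hg : HasSum g a) :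
    HasSum f a := by
  have hsummable : Summable f := (summable_prod_of_nonneg hf).2
    ⟨fun x => (hfiber x).summable, hg.summable.congr fun x => ((hfiber x).tsum_eq).symm⟩
  rw [← (hsummable.hasSum.prod_fiberwise hfiber).unique hg]
  exact hsummable.hasSum

namespace BinaryTree

variable {α : Type*} (child : α → Bool → α)

def descendant (x : α) (p : List Bool) : α := p.foldl child x

def level : ℕ → Finset (List Bool)
  | 0 => {[]}
  | N + 1 => (level N ×ˢ univ).image fun pt => pt.1 ++ [pt.2]

theorem mem_level {N : ℕ} {p : List Bool} : p ∈ level N ↔ p.length = N := by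
  induction N generalizing p with
  | zero => simp [level]
  | succ N ih =>
    rcases p.eq_nil_or_concat with rfl | ⟨p, t, rfl⟩
    · simp [level]
    · simp [level, ih]

theorem sum_level_succ {M : Type*} [AddCommMonoid M] (f : List Bool → M) (N : ℕ) :
    ∑ p ∈ level (N + 1), f p = ∑ p ∈ level N, (f (p ++ [false]) + f (p ++ [true])) := by
  rw [level, sum_image fun x _ y _ h => Prod.ext_iff.2 (by simpa using h), sum_product]
  simp [add_comm]

variable {child}

theorem descendant_cons (x : α) (t : Bool) (p : List Bool) :
    descendant child x (t :: p) = descendant child (child x t) p := rfl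

theorem descendant_append_singleton (x : α) (p : List Bool) (t : Bool) :
    descendant child x (p ++ [t]) = child (descendant child x p) t := by
  simp [descendant]

variable {S : Set α}

theorem descendant_mem (hS : ∀ y ∈ S, ∀ t, child y t ∈ S) {x : α} (hx : x ∈ S)
    (p : List Bool) : descendant child x p ∈ S := by
  induction p generalizing x with
  | nil => exact hx
  | cons t p ih => exact ih (hS x hx t)

theorem add_length_le_descendant {e : α → ℝ} (hS : ∀ y ∈ S, ∀ t, child y t ∈ S)
    (he : ∀ y ∈ S, ∀ t, e y + 1 ≤ e (child y t)) {x : α} (hx : x ∈ S) (p : List Bool) :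
    e x + p.length ≤ e (descendant child x p) := by
  induction p generalizing x with
  | nil => simp [descendant]
  | cons t p ih =>
    rw [descendant_cons, List.length_cons]
    push_cast
    linarith [he x hx t, ih (hS x hx t)]

theorem sum_level_descendant_of_additive {w : α → ℝ} (hS : ∀ y ∈ S, ∀ t, child y t ∈ S)
    (hw : ∀ y ∈ S, w (child y false) + w (child y true) = w y) {x : α} (hx : x ∈ S)
    (N : ℕ) : ∑ p ∈ level N, w (descendant child x p) = w x := by
  induction N with
  | zero => simp [level, descendant]
  | succ N ih =>
    rw [sum_level_succ, ← ih]
    refine sum_congr rfl fun p _ => ?_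
    simp only [descendant_append_singleton]
    exact hw _ (descendant_mem hS hx p)

theorem sum_level_telescope {f g : α → ℝ} (hS : ∀ y ∈ S, ∀ t, child y t ∈ S)
    (hfg : ∀ y ∈ S, f y = g y - (g (child y false) + g (child y true))) {x : α} (hx : x ∈ S)
    (N : ℕ) :
    ∑ p ∈ level N, f (descendant child x p) =
      ∑ p ∈ level N, g (descendant child x p) -
        ∑ p ∈ level (N + 1), g (descendant child x p) := by
  rw [sum_level_succ, ← sum_sub_distrib]
  refine sum_congr rfl fun p _ => ?_
  simp only [descendant_append_singleton]
  exact hfg _ (descendant_mem hS hx p)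

theorem hasSum_descendant {f g : α → ℝ} (hS : ∀ y ∈ S, ∀ t, child y t ∈ S)
    (hf : ∀ y ∈ S, 0 ≤ f y)
    (hfg : ∀ y ∈ S, f y = g y - (g (child y false) + g (child y true))) {x : α} (hx : x ∈ S)
    (htail : Tendsto (fun N => ∑ p ∈ level N, g (descendant child x p)) atTop (𝓝 0)) :
    HasSum (fun p => f (descendant child x p)) (g x) := by
  have hdisj : ∀ n : ℕ, ((range n : Finset ℕ) : Set ℕ).PairwiseDisjoint level :=
    fun n i _ j _ hij => disjoint_left.2 fun p hi hj =>
      hij ((mem_level.1 hi).symm.trans (mem_level.1 hj))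
  have hpartial : ∀ n, ∑ p ∈ (range n).biUnion level, f (descendant child x p) =
      g x - ∑ p ∈ level n, g (descendant child x p) := by
    intro n
    rw [sum_biUnion (hdisj n), sum_congr rfl fun k _ => sum_level_telescope hS hfg hx k,
      sum_range_sub' (fun k => ∑ p ∈ level k, g (descendant child x p))]
    simp [level, descendant]
  refine hasSum_of_tendsto_sum_of_monotone (fun p => hf _ (descendant_mem hS hx p))
    (fun m n hmn => biUnion_subset_biUnion_of_subset_left _ (range_mono hmn))
    (fun p => ⟨p.length + 1,
      mem_biUnion.2 ⟨p.length, self_mem_range_succ _, mem_level.2 rfl⟩⟩) ?_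
  simp_rw [hpartial]
  simpa using htail.const_sub (g x)

end BinaryTree

/-- Twice the error of the trapezoidal rule for `∫ t in k..k + 1, t⁻¹`. -/
noncomputable def trapezoidDefect (k : ℝ) : ℝ := 1 / k + 1 / (k + 1) - 2 * log ((k + 1) / k)

theorem trapezoidDefect_nonneg {k : ℝ} (hk : 0 < k) : 0 ≤ trapezoidDefect k := by
  have hx : 1 ≤ (k + 1) / k := by rw [le_div_iff₀ hk]; linarith
  have h := self_le_sinh_iff.2 (log_nonneg hx)
  rw [sinh_log (by positivity)] at h
  have : ((k + 1) / k - ((k + 1) / k)⁻¹) / 2 = (1 / k + 1 / (k + 1)) / 2 := by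
    field_simp; ring
  rw [trapezoidDefect]
  linarith

theorem trapezoidDefect_le {k : ℝ} (hk : 0 < k) : trapezoidDefect k ≤ 1 / (k * (k + 1)) := by
  have h := one_sub_inv_le_log_of_pos (x := (k + 1) / k) (by positivity)
  have : 1 - ((k + 1) / k)⁻¹ = 1 / (k + 1) := by field_simp; ring
  have : 1 / k - 1 / (k + 1) = 1 / (k * (k + 1)) := by field_simp; ring
  rw [trapezoidDefect]
  linarith

theorem sum_range_trapezoidDefect (N : ℕ) :
    ∑ n ∈ range N, trapezoidDefect (n + 1) =
      2 * (harmonic N - log (N + 1)) - 1 + 1 / (N + 1) := by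
  induction N with
  | zero => simp
  | succ N ih =>
    rw [sum_range_succ, ih, trapezoidDefect, harmonic_succ,
      log_div (by positivity) (by positivity)]
    push_cast
    field_simp
    ring

theorem hasSum_trapezoidDefect :
    HasSum (fun n : ℕ => trapezoidDefect (n + 1)) (2 * eulerMascheroniConstant - 1) := by
  rw [hasSum_iff_tendsto_nat_of_nonneg fun n => trapezoidDefect_nonneg (by positivity)]
  simp_rw [sum_range_trapezoidDefect]
  have h := ((tendsto_harmonic_sub_log_add_one.const_mul 2).sub_const 1).add
    tendsto_one_div_add_atTop_nhds_zero_nat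
  simpa using h

theorem trapezoidDefect_sub_add {A B C D : ℝ} (hA : 0 < A) (hB : 0 < B) (hC : 0 < C) (hD : 0 < D)
    (h : B * C = A * D + 1) :
    trapezoidDefect (A * D) - (trapezoidDefect (A * (B + D)) + trapezoidDefect ((A + C) * D)) =
      1 / (A * B * C * D * (A + C) * (B + D)) := by
  have hL : A * (B + D) + 1 = B * (A + C) := by linear_combination -h
  have hR : (A + C) * D + 1 = C * (B + D) := by linear_combination -h
  have hlog : log (B * C / (A * D)) =
      log (B * (A + C) / (A * (B + D))) + log (C * (B + D) / ((A + C) * D)) := by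
    rw [← log_mul (by positivity) (by positivity)]
    congr 1
    field_simp
  simp only [trapezoidDefect]
  rw [← h, hL, hR, hlog]
  obtain rfl : C = (A * D + 1) / B := by field_simp; linarith
  field_simp
  ring

namespace Farey

open BinaryTree

theorem mem_H_iff {a b c d : ℤ} :
    (a, b, c, d) ∈ H ↔ 0 < a ∧ 0 < b ∧ 0 < c ∧ 0 < d ∧ b * c - a * d = 1 ∧ c ≤ d :=
  Iff.rfl

def child : ℤ × ℤ × ℤ × ℤ → Bool → ℤ × ℤ × ℤ × ℤ
  | (a, b, c, d), false => (a, b, a + c, b + d)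
  | (a, b, c, d), true => (a + c, b + d, c, d)

def root (n : ℕ) : ℤ × ℤ × ℤ × ℤ := (1, n + 2, 1, n + 1)

theorem child_mem (q : ℤ × ℤ × ℤ × ℤ) (hq : q ∈ H) (t : Bool) : child q t ∈ H := by
  obtain ⟨a, b, c, d⟩ := q
  obtain ⟨ha, hb, hc, hd, hbc, hcd⟩ := mem_H_iff.1 hq
  cases t
  · exact mem_H_iff.2 ⟨ha, hb, by omega, by omega, by linear_combination hbc, by nlinarith⟩
  · exact mem_H_iff.2 ⟨by omega, by omega, hc, hd, by linear_combination hbc, hcd⟩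

theorem root_mem (n : ℕ) : root n ∈ H :=
  mem_H_iff.2 ⟨one_pos, by positivity, one_pos, by positivity, by ring, by simp⟩

theorem eq_root_or_eq_child {q : ℤ × ℤ × ℤ × ℤ} (hq : q ∈ H) :
    (∃ n : ℕ, root n = q) ∨
      ∃ q' ∈ H, ∃ t, child q' t = q ∧ q'.2.1 + q'.2.2.2 < q.2.1 + q.2.2.2 := by
  obtain ⟨a, b, c, d⟩ := q
  obtain ⟨ha, hb, hc, hd, hbc, hcd⟩ := mem_H_iff.1 hq
  -- `b = d` is impossible, and when `d < b` we have `c ≤ a`, with equality only at a root.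
  rcases lt_trichotomy b d with hlt | rfl | hgt
  · have hac : a < c := by nlinarith
    exact Or.inr ⟨(a, b, c - a, d - b), mem_H_iff.2 ⟨ha, hb, by omega, by omega,
      by linear_combination hbc, by nlinarith⟩, false, by simp [child], by simp; omega⟩
  · have : b * (c - a) = 1 := by linear_combination hbc
    rcases Int.mul_eq_one_iff_eq_one_or_neg_one.1 this with ⟨_, _⟩ | ⟨_, _⟩ <;> omega
  · rcases lt_trichotomy c a with hlt | rfl | hca
    · exact Or.inr ⟨(a - c, b - d, c, d), mem_H_iff.2 ⟨by omega, by omega, hc, hd,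
        by linear_combination hbc, hcd⟩, true, by simp [child], by simp; omega⟩
    · have : c * (b - d) = 1 := by linear_combination hbc
      rcases Int.mul_eq_one_iff_eq_one_or_neg_one.1 this with ⟨rfl, _⟩ | ⟨_, _⟩
      · exact Or.inl ⟨(d - 1).toNat, by simp [root]; omega⟩
      · omega
    · nlinarith

theorem exists_descendant_root_eq {q : ℤ × ℤ × ℤ × ℤ} (hq : q ∈ H) :
    ∃ n p, descendant child (root n) p = q := by
  induction hm : (q.2.1 + q.2.2.2).toNat using Nat.strong_induction_on generalizing q with
  | _ m ih =>
    rcases eq_root_or_eq_child hq with ⟨n, hn⟩ | ⟨q', hq', t, rfl, hlt⟩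
    · exact ⟨n, [], hn⟩
    · have : 0 < q'.2.1 + q'.2.2.2 := add_pos hq'.2.1 hq'.2.2.2.1
      obtain ⟨n, p, hnp⟩ := ih _ (by omega) hq' rfl
      exact ⟨n, p ++ [t], by rw [descendant_append_singleton, hnp]⟩

theorem child_inj {q q' : ℤ × ℤ × ℤ × ℤ} (hq : q ∈ H) (hq' : q' ∈ H) {t t' : Bool}
    (h : child q t = child q' t') : t = t' ∧ q = q' := by
  obtain ⟨a, b, c, d⟩ := q
  obtain ⟨a', b', c', d'⟩ := q'
  obtain ⟨ha, hb, hc, hd, -⟩ := mem_H_iff.1 hq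
  obtain ⟨ha', hb', hc', hd', -⟩ := mem_H_iff.1 hq'
  cases t <;> cases t' <;> simp only [child, Prod.mk.injEq] at h <;> simp <;> omega

theorem child_ne_root {q : ℤ × ℤ × ℤ × ℤ} (hq : q ∈ H) (t : Bool) (n : ℕ) :
    child q t ≠ root n := by
  obtain ⟨a, b, c, d⟩ := q
  obtain ⟨ha, hb, hc, hd, -⟩ := mem_H_iff.1 hq
  cases t <;> simp only [child, root, ne_eq, Prod.mk.injEq] <;> omega

theorem descendant_root_injective :
    Function.Injective fun np : ℕ × List Bool => descendant child (root np.1) np.2 := by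
  rintro ⟨n, p⟩ ⟨m, p'⟩ h
  simp only at h
  induction p using List.reverseRecOn generalizing p' with
  | nil =>
    rcases p'.eq_nil_or_concat with rfl | ⟨p', t', rfl⟩
    · simp only [descendant, List.foldl_nil, root, Prod.mk.injEq] at h
      simp; omega
    · rw [List.concat_eq_append, descendant_append_singleton] at h
      exact absurd h.symm (child_ne_root (descendant_mem child_mem (root_mem m) p') t' n)
  | append_singleton p t ih =>
    rcases p'.eq_nil_or_concat with rfl | ⟨p', t', rfl⟩
    · rw [descendant_append_singleton] at h
      exact absurd h (child_ne_root (descendant_mem child_mem (root_mem n) p) t m)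
    · rw [List.concat_eq_append, descendant_append_singleton, descendant_append_singleton] at h
      obtain ⟨rfl, hpp⟩ := child_inj (descendant_mem child_mem (root_mem n) p)
        (descendant_mem child_mem (root_mem m) p') h
      simpa using ih p' hpp

noncomputable def treeEquiv : ℕ × List Bool ≃ H :=
  Equiv.ofBijective (fun np => ⟨descendant child (root np.1) np.2,
      descendant_mem child_mem (root_mem np.1) np.2⟩)
    ⟨fun _ _ h => descendant_root_injective (congrArg Subtype.val h), fun ⟨_, hq⟩ =>
      let ⟨n, p, h⟩ := exists_descendant_root_eq hq; ⟨(n, p), Subtype.ext h⟩⟩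

noncomputable def summand : ℤ × ℤ × ℤ × ℤ → ℝ
  | (a, b, c, d) => 1 / ((a : ℝ) * b * c * d * (a + c) * (b + d))

noncomputable def potential : ℤ × ℤ × ℤ × ℤ → ℝ
  | (a, _, _, d) => trapezoidDefect (a * d)

/-- On `H` this is the length `c / d - a / b` of the Farey interval. -/
noncomputable def intervalLength : ℤ × ℤ × ℤ × ℤ → ℝ
  | (_, b, _, d) => 1 / ((b : ℝ) * d)

def numeratorProduct : ℤ × ℤ × ℤ × ℤ → ℝ
  | (a, _, c, _) => (a : ℝ) * c

theorem summand_nonneg (q : ℤ × ℤ × ℤ × ℤ) (hq : q ∈ H) : 0 ≤ summand q := by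
  obtain ⟨a, b, c, d⟩ := q
  obtain ⟨ha, hb, hc, hd, -⟩ := mem_H_iff.1 hq
  simp only [summand]
  positivity

theorem summand_eq_potential_sub (q : ℤ × ℤ × ℤ × ℤ) (hq : q ∈ H) :
    summand q = potential q - (potential (child q false) + potential (child q true)) := by
  obtain ⟨a, b, c, d⟩ := q
  obtain ⟨ha, hb, hc, hd, hbc, -⟩ := mem_H_iff.1 hq
  simp only [summand, potential, child]
  push_cast
  rw [trapezoidDefect_sub_add (by positivity) (by positivity) (by positivity) (by positivity)
    (by exact_mod_cast (by linarith : b * c = a * d + 1))]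

theorem potential_nonneg (q : ℤ × ℤ × ℤ × ℤ) (hq : q ∈ H) : 0 ≤ potential q := by
  obtain ⟨a, b, c, d⟩ := q
  obtain ⟨ha, -, -, hd, -⟩ := mem_H_iff.1 hq
  exact trapezoidDefect_nonneg (by positivity)

theorem potential_le (q : ℤ × ℤ × ℤ × ℤ) (hq : q ∈ H) :
    potential q ≤ intervalLength q / numeratorProduct q := by
  obtain ⟨a, b, c, d⟩ := q
  obtain ⟨ha, hb, hc, hd, hbc, -⟩ := mem_H_iff.1 hq
  have hbc' : (b * c : ℝ) = a * d + 1 := by exact_mod_cast (by linarith : b * c = a * d + 1)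
  calc potential (a, b, c, d) ≤ 1 / (a * d * (a * d + 1)) := trapezoidDefect_le (by positivity)
    _ = intervalLength (a, b, c, d) / numeratorProduct (a, b, c, d) := by
      simp only [intervalLength, numeratorProduct]
      rw [← hbc']
      field_simp

theorem intervalLength_nonneg (q : ℤ × ℤ × ℤ × ℤ) (hq : q ∈ H) :
    0 ≤ intervalLength q := by
  obtain ⟨a, b, c, d⟩ := q
  obtain ⟨-, hb, -, hd, -⟩ := mem_H_iff.1 hq
  simp only [intervalLength]
  positivity

theorem intervalLength_child_add (q : ℤ × ℤ × ℤ × ℤ) (hq : q ∈ H) :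
    intervalLength (child q false) + intervalLength (child q true) = intervalLength q := by
  obtain ⟨a, b, c, d⟩ := q
  obtain ⟨-, hb, -, hd, -⟩ := mem_H_iff.1 hq
  simp only [intervalLength, child]
  push_cast
  field_simp
  ring

theorem numeratorProduct_add_one_le (q : ℤ × ℤ × ℤ × ℤ) (hq : q ∈ H) (t : Bool) :
    numeratorProduct q + 1 ≤ numeratorProduct (child q t) := by
  obtain ⟨a, b, c, d⟩ := q
  obtain ⟨ha, -, hc, -⟩ := mem_H_iff.1 hq
  have ha' : (1 : ℝ) ≤ a := by exact_mod_cast ha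
  have hc' : (1 : ℝ) ≤ c := by exact_mod_cast hc
  cases t <;> simp only [numeratorProduct, child] <;> push_cast <;> nlinarith

theorem tendsto_sum_level_potential {q : ℤ × ℤ × ℤ × ℤ} (hq : q ∈ H) :
    Tendsto (fun N => ∑ p ∈ level N, potential (descendant child q p)) atTop (𝓝 0) := by
  have hq1 : 1 ≤ numeratorProduct q := by
    obtain ⟨a, b, c, d⟩ := q
    obtain ⟨ha, -, hc, -⟩ := mem_H_iff.1 hq
    simp only [numeratorProduct]
    exact one_le_mul_of_one_le_of_one_le (by exact_mod_cast ha) (by exact_mod_cast hc)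
  have hbound : ∀ N : ℕ, ∑ p ∈ level N, potential (descendant child q p) ≤
      intervalLength q * (1 / (N + 1)) := by
    intro N
    calc ∑ p ∈ level N, potential (descendant child q p)
        ≤ ∑ p ∈ level N, intervalLength (descendant child q p) / (N + 1) := by
          refine sum_le_sum fun p hp => ?_
          have hmem := descendant_mem child_mem hq p
          refine (potential_le _ hmem).trans
            (div_le_div_of_nonneg_left (intervalLength_nonneg _ hmem) (by positivity) ?_)
          have := add_length_le_descendant child_mem numeratorProduct_add_one_le hq p
          rw [mem_level.1 hp] at this
          linarith
      _ = intervalLength q * (1 / (N + 1)) := by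
          rw [← sum_div, sum_level_descendant_of_additive child_mem intervalLength_child_add hq]
          ring
  exact squeeze_zero
    (fun N => sum_nonneg fun p _ => potential_nonneg _ (descendant_mem child_mem hq p)) hbound
    (by simpa using tendsto_one_div_add_atTop_nhds_zero_nat.const_mul (intervalLength q))

theorem potential_root (n : ℕ) : potential (root n) = trapezoidDefect (n + 1) := by
  simp [potential, root]

theorem hasSum_summand_descendant_root :
    HasSum (fun np : ℕ × List Bool => summand (descendant child (root np.1) np.2))
      (2 * eulerMascheroniConstant - 1) := by
  have hfiber (n : ℕ) :
      HasSum (fun p => summand (descendant child (root n) p)) (potential (root n)) :=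
    hasSum_descendant child_mem summand_nonneg summand_eq_potential_sub (root_mem n)
      (tendsto_sum_level_potential (root_mem n))
  have hroots : HasSum (fun n => potential (root n)) (2 * eulerMascheroniConstant - 1) := by
    simpa only [potential_root] using hasSum_trapezoidDefect
  exact hasSum_prod_of_nonneg
    (fun np => summand_nonneg _ (descendant_mem child_mem (root_mem np.1) np.2)) hfiber hroots

end Farey

theorem stmt_18 :
    HasSum
      (fun p : H =>
        1 / ((p.val.1 : ℝ) * (p.val.2.1 : ℝ) * (p.val.2.2.1 : ℝ) * (p.val.2.2.2 : ℝ) *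
          ((p.val.1 : ℝ) + (p.val.2.2.1 : ℝ)) * ((p.val.2.1 : ℝ) + (p.val.2.2.2 : ℝ))))
      (2 * Real.eulerMascheroniConstant - 1) := by
  rw [← Farey.treeEquiv.hasSum_iff]
  exact Farey.hasSum_summand_descendant_root
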